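/- Let 𝔤 be a Lie ring acting on an abelian group A, and suppose 𝔥 ≤ 𝔤 is a finite-index Lie subring. If f is a partial homomorphism from 𝔤 to A whose restriction to 𝔥 ∩ Dom(f) differs from the inner derivation d(a) (g ↦ g·a) by a map with finite image, then f differs from d(a) by a map with finite image on all of Dom(f) ∩ (finite-index subgroup); i.e., the restriction map res: H̃¹(𝔤, A) → H̃¹(𝔥, A) is injective. -/

import Mathlib

/-!
Since `d(a)` is additive, `x ↦ f x - ⁅x, a⁆` is a homomorphism on `Dom f`. Its image on
`𝔥 ∩ Dom f`, a subgroup of finite index in `Dom f`, is finite and has finite index in the image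
on all of `Dom f`, which is therefore finite.
-/

/-- A partial homomorphism from `G` to `A`: a homomorphism defined on a
finite-index subgroup of `G`. -/
structure PartialHom (G A : Type*) [AddCommGroup G] [AddCommGroup A] where
  dom : AddSubgroup G
  finiteIndex : dom.index ≠ 0
  toFun : G → A
  map_add' : ∀ x ∈ dom, ∀ y ∈ dom, toFun (x + y) = toFun x + toFun y

theorem AddMonoidHom.finite_range_of_finite_map {G A : Type*} [AddGroup G] [AddGroup A]
    (φ : G →+ A) {H : AddSubgroup G} (hH : H.index ≠ 0) (hφ : (H.map φ : Set A).Finite) :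
    (Set.range φ).Finite := by
  set H' := H.map φ.rangeRestrict
  have : Finite H' := by
    have : Finite (H.map φ) := hφ.to_subtype
    refine Finite.of_injective (fun x : H' => (⟨x.1.1, ?_⟩ : H.map φ)) fun x y hxy => ?_
    · obtain ⟨g, hg, hgx⟩ := x.2
      exact ⟨g, hg, congrArg Subtype.val hgx⟩
    · exact Subtype.ext (Subtype.ext (Subtype.mk.inj hxy))
  have : Finite (φ.range ⧸ H') :=
    AddSubgroup.index_ne_zero_iff_finite.mp
      (ne_zero_of_dvd_ne_zero hH (H.index_map_dvd φ.rangeRestrict_surjective))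
  have : Finite φ.range := Finite.of_addSubgroup_quotient H'
  exact Set.toFinite (φ.range : Set A)

theorem AddSubgroup.finite_image_of_finite_image_inf {G A : Type*} [AddGroup G] [AddGroup A]
    {H K : AddSubgroup G} (hH : H.relIndex K ≠ 0) {g : G → A}
    (hg : ∀ x ∈ K, ∀ y ∈ K, g (x + y) = g x + g y)
    (hfin : (g '' (H ⊓ K : AddSubgroup G)).Finite) : (g '' K).Finite := by
  let φ : K →+ A := AddMonoidHom.mk' (fun x => g x) fun x y => hg x x.2 y y.2
  have hrange : g '' K = Set.range φ := Set.image_eq_range g K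
  have hmap : ((H.addSubgroupOf K).map φ : Set A) = g '' (H ⊓ K : AddSubgroup G) := by
    ext a
    simp [φ, AddSubgroup.mem_addSubgroupOf, and_comm]
  rw [hrange]
  exact φ.finite_range_of_finite_map hH (hmap ▸ hfin)

theorem res_injective_general {L A : Type*} [LieRing L] [AddCommGroup A] [LieRingModule L A]
    (h : AddSubgroup L) (hfin : h.index ≠ 0)
    (f : PartialHom L A) (a : A)
    (hres : Set.Finite ((fun x => f.toFun x - ⁅x, a⁆) ''
      ((h ⊓ f.dom : AddSubgroup L) : Set L))) :
    Set.Finite ((fun x => f.toFun x - ⁅x, a⁆) '' ((f.dom : AddSubgroup L) : Set L)) := by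
  have hrel : h.relIndex f.dom ≠ 0 := mt AddSubgroup.index_eq_zero_of_relIndex_eq_zero hfin
  refine AddSubgroup.finite_image_of_finite_image_inf hrel (fun x hx y hy => ?_) hres
  rw [f.map_add' x hx y hy, add_lie]
  abel

/-- If `𝔥` is a finite-index Lie subring of `𝔤` and the partial homomorphism `f`
differs from the inner derivation `d(a) : g ↦ g·a` by a map with finite image on
`𝔥 ∩ Dom f`, then `f` differs from `d(a)` by a map with finite image on all of
`Dom f`; i.e. the restriction map `res : H̃¹(𝔤, A) → H̃¹(𝔥, A)` is injective. -/
theorem res_injective {L A : Type*} [LieRing L] [AddCommGroup A] [LieRingModule L A]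
    (h : AddSubgroup L) (hsub : ∀ x ∈ h, ∀ y ∈ h, ⁅x, y⁆ ∈ h) (hfin : h.index ≠ 0)
    (f : PartialHom L A) (a : A)
    (hres : Set.Finite ((fun x => f.toFun x - ⁅x, a⁆) ''
      ((h ⊓ f.dom : AddSubgroup L) : Set L))) :
    Set.Finite ((fun x => f.toFun x - ⁅x, a⁆) '' ((f.dom : AddSubgroup L) : Set L)) :=
  res_injective_general h hfin f a hres
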